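/- arXiv:2104.00209 — 2 statements merged into one kernel-verified Lean document; each statement's English description precedes it below -/
import Mathlib

section
/- (Trilinear kernel bound) Let f ∈ 𝓢(ℝ), fix ξ ∈ ℝ, and define G(ξ,η,σ) = 𝓕f(ξ−η) · 𝓕(conj f)(η−ξ+σ) · 𝓕f(ξ−σ). Then there is an absolute constant C such that for all (η,σ) ∈ ℝ², |𝓕^{-1}_{η,σ}[G](η,σ)| ≤ C ∫_ℝ |f(z−η)| |f(z)| |f(z−σ)| dz, where 𝓕^{-1}_{η,σ} is the inverse two-dimensional Fourier transform acting in the variables (η,σ). -/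
open MeasureTheory Complex
open scoped ENNReal

noncomputable section

/-- The Fourier transform with the paper's convention:
`𝓕f(ξ) = (2π)^{-1/2} ∫ e^{ixξ} f(x) dx`. -/
def FT (f : ℝ → ℂ) (ξ : ℝ) : ℂ :=
  ((2 * Real.pi) ^ (-(1 : ℝ)/2)) • ∫ x : ℝ, Complex.exp (Complex.I * x * ξ) * f x

/-- The inverse Fourier transform: `𝓕⁻¹f(x) = (2π)^{-1/2} ∫ e^{-ixξ} f(ξ) dξ`. -/
def FTinv (f : ℝ → ℂ) (x : ℝ) : ℂ :=
  ((2 * Real.pi) ^ (-(1 : ℝ)/2)) • ∫ ξ : ℝ, Complex.exp (-(Complex.I * x * ξ)) * f ξ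

/-- The free Schrödinger propagator `e^{itΔ} = 𝓕⁻¹ e^{-itξ²} 𝓕`. -/
def schrod (t : ℝ) (f : ℝ → ℂ) : ℝ → ℂ :=
  FTinv fun ξ => Complex.exp (-(Complex.I * t * ξ ^ 2)) * FT f ξ

/-- The `L^p` norm of a function on `ℝ`, as a real number. -/
def Lnorm (p : ℝ≥0∞) (f : ℝ → ℂ) : ℝ := (eLpNorm f p volume).toReal

/-- The operator `⟨∂_x⟩ = 𝓕⁻¹⟨ξ⟩𝓕`. -/
def jder (f : ℝ → ℂ) : ℝ → ℂ :=
  FTinv fun ξ => (Real.sqrt (1 + ξ ^ 2) : ℂ) * FT f ξ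

/-- The `H^{1,1}` norm: `‖⟨∂_x⟩u‖_{L²} + ‖xu‖_{L²}`. -/
def H11norm (f : ℝ → ℂ) : ℝ :=
  Lnorm 2 (jder f) + Lnorm 2 (fun x : ℝ => (x : ℂ) * f x)

/-- Membership in `H^{1,1}`. -/
def MemH11 (f : ℝ → ℂ) : Prop :=
  MemLp (jder f) 2 (volume : Measure ℝ) ∧
    MemLp (fun x : ℝ => (x : ℂ) * f x) 2 (volume : Measure ℝ)

/-- The Galilean operator `J(t) = x + 2it∂_x`. -/
def galilean (t : ℝ) (f : ℝ → ℂ) : ℝ → ℂ :=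
  fun x : ℝ => (x : ℂ) * f x + 2 * Complex.I * (t : ℂ) * deriv f x

/-- The piecewise-constant dispersion profile `d`. -/
def dmDisp (dp dm tp : ℝ) (t : ℝ) : ℝ := if t < tp then dp else -dm

/-- `D(τ) = ∫_0^τ (d(σ) - 1) dσ`. -/
def dmD (dp dm tp : ℝ) (τ : ℝ) : ℝ := ∫ σ in (0:ℝ)..τ, (dmDisp dp dm tp σ - 1)

/-- The cubic nonlinearity conjugated by the propagator:
`e^{-iaΔ}( |e^{iaΔ}f|² e^{iaΔ}f )`. -/
def dmNonlin (a : ℝ) (f : ℝ → ℂ) : ℝ → ℂ :=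
  schrod (-a) fun y => (‖schrod a f y‖ : ℂ) ^ 2 * schrod a f y

/-- `u` solves the averaged dispersion-managed cubic NLS
`i∂_t u + ∂_{xx} u = ∫_0^1 e^{-iD(τ)Δ}[|e^{iD(τ)Δ}u|² e^{iD(τ)Δ}u] dτ` for times in `s`. -/
def IsDMSol (D : ℝ → ℝ) (u : ℝ → ℝ → ℂ) (s : Set ℝ) : Prop :=
  ∀ t ∈ s, ∀ x : ℝ,
    Complex.I * deriv (fun t' => u t' x) t + deriv (deriv (u t)) x
      = ∫ τ in (0:ℝ)..1, dmNonlin (D τ) (u t) x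

/-- The profile `f(t) = e^{-itΔ}u(t)`. -/
def dmProfile (u : ℝ → ℝ → ℂ) (t : ℝ) : ℝ → ℂ := schrod (-t) (u t)

/-- The dispersive norm `‖u(t)‖_{X_D} = ‖𝓕f(t)‖_{L^∞}`. -/
def XD (u : ℝ → ℝ → ℂ) (t : ℝ) : ℝ := Lnorm ⊤ (FT (dmProfile u t))

/-- The energy norm `‖u(t)‖_{X_E} = t^{-1/20}(‖⟨∂_x⟩u(t)‖_{L²} + ‖J(t)u(t)‖_{L²})`. -/
def XE (u : ℝ → ℝ → ℂ) (t : ℝ) : ℝ :=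
  t ^ (-(1 : ℝ)/20) * (Lnorm 2 (jder (u t)) + Lnorm 2 (galilean t (u t)))

/-- `‖u‖_X = sup_{s ∈ [1,T]} (‖u(s)‖_{X_D} + ‖u(s)‖_{X_E})`. -/
def Xnorm (u : ℝ → ℝ → ℂ) (T : ℝ) : ℝ :=
  sSup ((fun s => XD u s + XE u s) '' Set.Icc 1 T)

/-- Continuity in time with values in `H^{1,1}`. -/
def ContH11On (u : ℝ → ℝ → ℂ) (s : Set ℝ) : Prop :=
  ∀ t ∈ s, MemH11 (u t) ∧
    Filter.Tendsto (fun t' => H11norm fun x => u t' x - u t x)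
      (nhdsWithin t s) (nhds 0)

/-- Continuity in time with values in `H^1`. -/
def ContH1On (u : ℝ → ℝ → ℂ) (s : Set ℝ) : Prop :=
  ∀ t ∈ s, MemLp (jder (u t)) 2 (volume : Measure ℝ) ∧
    Filter.Tendsto (fun t' => Lnorm 2 (jder fun x => u t' x - u t x))
      (nhdsWithin t s) (nhds 0)

/-- The phase `Θ(t,ξ)`. -/
def dmTheta (D : ℝ → ℝ) (u : ℝ → ℝ → ℂ) (t ξ : ℝ) : ℝ :=
  ∫ s in (1:ℝ)..t, ∫ τ in (0:ℝ)..1,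
    (2 * (s + D τ))⁻¹ * ‖FT (dmProfile u s) ξ‖ ^ 2

/-- The modified profile `g(t,ξ) = e^{iΘ(t,ξ)} 𝓕f(t,ξ)`. -/
def dmG (D : ℝ → ℝ) (u : ℝ → ℝ → ℂ) (t ξ : ℝ) : ℂ :=
  Complex.exp (Complex.I * dmTheta D u t ξ) * FT (dmProfile u t) ξ

/-! Writing `𝓕(conj f)(p₁ - ξ + p₂)` as an integral over a new variable `y` and integrating over
the frequencies `p = (p₁, p₂)` first (Fubini), the kernel factorises: each of the two remaining
`𝓕 f` factors, multiplied by its phase, is a translated Fourier inversion and returns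
`f (y - η)`, resp. `f (y - σ)`. Thus
`𝓕⁻¹[G](η, σ) = (2π)^{-1/2} ∫ e^{iξ(y-η-σ)} f(y-η) conj f(y) f(y-σ) dy`,
and the bound holds with `C = (2π)^{-1/2}`. -/

open scoped FourierTransform ComplexConjugate

theorem two_pi_inv_eq_rpow_neg_half_sq :
    (2 * Real.pi)⁻¹ = ((2 * Real.pi) ^ (-(1 : ℝ)/2)) ^ 2 := by
  rw [← Real.rpow_natCast, ← Real.rpow_mul (by positivity)]
  norm_num [Real.rpow_neg_one]

theorem FT_eq_fourier (f : ℝ → ℂ) :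
    FT f = fun ζ => ((2 * Real.pi) ^ (-(1 : ℝ)/2)) • 𝓕 f ((-(2 * Real.pi))⁻¹ * ζ) := by
  ext ζ
  rw [FT, Real.fourier_real_eq_integral_exp_smul]
  congr 1
  refine integral_congr_ae (ae_of_all _ fun v => ?_)
  have hπ : (Real.pi : ℂ) ≠ 0 := by exact_mod_cast Real.pi_ne_zero
  simp only [smul_eq_mul]
  push_cast
  field_simp

theorem integrable_FT {f : ℝ → ℂ} (hf : Integrable (𝓕 f)) : Integrable (FT f) := by
  rw [FT_eq_fourier]
  exact (hf.comp_mul_left' (inv_ne_zero (neg_ne_zero.2 Real.two_pi_pos.ne'))).smul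
    ((2 * Real.pi) ^ (-(1 : ℝ)/2))

theorem continuous_FT {f : ℝ → ℂ} (hf : Continuous (𝓕 f)) : Continuous (FT f) := by
  rw [FT_eq_fourier]
  fun_prop

theorem FTinv_FT {f : ℝ → ℂ} (hc : Continuous f) (hi : Integrable f) (hF : Integrable (𝓕 f)) :
    FTinv (FT f) = f := by
  ext x
  set c : ℝ := (2 * Real.pi) ^ (-(1 : ℝ)/2)
  have h2π : 0 < 2 * Real.pi := by positivity
  have hsub : ∫ ζ : ℝ, exp (-(I * x * ζ)) * FT f ζ
      = (2 * Real.pi) • ∫ v : ℝ, exp (-(I * x * ↑(-(2 * Real.pi) * v))) *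
          FT f (-(2 * Real.pi) * v) := by
    rw [Measure.integral_comp_mul_left (fun ζ : ℝ => exp (-(I * x * ζ)) * FT f ζ),
      abs_inv, abs_neg, abs_of_pos h2π, smul_smul, mul_inv_cancel₀ h2π.ne', one_smul]
  have hinv : ∫ v : ℝ, exp (-(I * x * ↑(-(2 * Real.pi) * v))) * FT f (-(2 * Real.pi) * v)
      = c • 𝓕⁻ (𝓕 f) x := by
    rw [Real.fourierInv_eq_fourier_neg, Real.fourier_real_eq_integral_exp_smul, ← integral_smul]
    refine integral_congr_ae (ae_of_all _ fun v => ?_)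
    rw [FT_eq_fourier]
    dsimp only
    rw [inv_mul_cancel_left₀ (neg_ne_zero.2 h2π.ne'), mul_smul_comm, smul_eq_mul]
    congr 3
    push_cast
    ring
  rw [FTinv, hsub, hinv, hc.fourierInv_fourier_eq hi hF, smul_smul, smul_smul]
  have hc2 : c * (2 * Real.pi) * c = 1 := by
    rw [mul_right_comm, ← sq, ← two_pi_inv_eq_rpow_neg_half_sq, inv_mul_cancel₀ h2π.ne']
  exact (congrArg (· • f x) hc2).trans (one_smul ℝ _)

theorem smul_integral_exp_mul_FT_sub {f : ℝ → ℂ} (hc : Continuous f) (hi : Integrable f)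
    (hF : Integrable (𝓕 f)) (ξ t : ℝ) :
    ((2 * Real.pi) ^ (-(1 : ℝ)/2)) • ∫ p : ℝ, exp (I * p * t) * FT f (ξ - p)
      = exp (I * ξ * t) * f t := by
  have hshift : ∀ p : ℝ, exp (I * p * t) * FT f (ξ - p)
      = exp (I * ξ * t) * (exp (-(I * t * ↑(ξ - p))) * FT f (ξ - p)) := by
    intro p
    rw [← mul_assoc, ← exp_add]
    push_cast
    ring_nf
  simp_rw [hshift]
  rw [integral_const_mul, integral_sub_left_eq_self (fun a : ℝ => exp (-(I * t * a)) * FT f a),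
    ← mul_smul_comm, ← FTinv, FTinv_FT hc hi hF]

theorem integral_integral_mul_mul_swap {u v : ℝ → ℝ → ℂ} {w : ℝ → ℂ} {U V : ℝ → ℝ}
    (hu : Continuous (Function.uncurry u)) (hv : Continuous (Function.uncurry v))
    (hw : Continuous w) (hU : Integrable U) (hV : Integrable V) (hwi : Integrable w)
    (huU : ∀ a y, ‖u a y‖ ≤ U a) (hvV : ∀ b y, ‖v b y‖ ≤ V b) :
    ∫ p : ℝ × ℝ, ∫ y, u p.1 y * v p.2 y * w y = ∫ y, (∫ a, u a y) * (∫ b, v b y) * w y := by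
  have hint : Integrable (Function.uncurry fun (p : ℝ × ℝ) y => u p.1 y * v p.2 y * w y)
      ((volume.prod volume).prod volume) := by
    refine ((hU.mul_prod hV).mul_prod hwi.norm).mono' ?_ (ae_of_all _ fun q => ?_)
    · have hu' : Continuous fun q : (ℝ × ℝ) × ℝ => u q.1.1 q.2 :=
        hu.comp (f := fun q : (ℝ × ℝ) × ℝ => (q.1.1, q.2)) (by fun_prop)
      have hv' : Continuous fun q : (ℝ × ℝ) × ℝ => v q.1.2 q.2 :=
        hv.comp (f := fun q : (ℝ × ℝ) × ℝ => (q.1.2, q.2)) (by fun_prop)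
      exact ((hu'.mul hv').mul (hw.comp continuous_snd)).aestronglyMeasurable
    · simp only [Function.uncurry, norm_mul]
      gcongr
      · exact (norm_nonneg _).trans (huU _ q.2)
      · exact huU _ _
      · exact hvV _ _
  rw [Measure.volume_eq_prod, integral_integral_swap hint]
  refine integral_congr_ae (ae_of_all _ fun y => ?_)
  dsimp only
  rw [integral_mul_const, integral_prod_mul (fun a => u a y) (fun b => v b y)]

theorem exp_mul_FT_conj_eq_integral (f : ℝ → ℂ) (ξ η σ a b : ℝ) :
    exp (-(I * ((a : ℂ) * η + (b : ℂ) * σ))) *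
        (FT f (ξ - a) * FT (fun x => conj (f x)) (a - ξ + b) * FT f (ξ - b))
      = ((2 * Real.pi) ^ (-(1 : ℝ)/2)) • ∫ y : ℝ, (exp (I * a * ↑(y - η)) * FT f (ξ - a)) *
          (exp (I * b * ↑(y - σ)) * FT f (ξ - b)) * (exp (-(I * y * ξ)) * conj (f y)) := by
  have hconj : FT (fun x => conj (f x)) (a - ξ + b) = ((2 * Real.pi) ^ (-(1 : ℝ)/2)) •
      ∫ y : ℝ, exp (I * y * ↑(a - ξ + b)) * conj (f y) := rfl
  have hphase : ∀ y : ℝ, exp (I * a * ↑(y - η)) * exp (I * b * ↑(y - σ)) * exp (-(I * y * ξ))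
      = exp (-(I * ((a : ℂ) * η + (b : ℂ) * σ))) * exp (I * y * ↑(a - ξ + b)) := by
    intro y
    simp only [← exp_add]
    push_cast
    ring_nf
  have hsplit : ∀ y : ℝ, (exp (I * a * ↑(y - η)) * FT f (ξ - a)) *
        (exp (I * b * ↑(y - σ)) * FT f (ξ - b)) * (exp (-(I * y * ξ)) * conj (f y))
      = exp (-(I * ((a : ℂ) * η + (b : ℂ) * σ))) * (FT f (ξ - a) * FT f (ξ - b)) *
          (exp (I * y * ↑(a - ξ + b)) * conj (f y)) := by
    intro y
    linear_combination (FT f (ξ - a) * FT f (ξ - b) * conj (f y)) * hphase y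
  simp_rw [hsplit]
  rw [integral_const_mul, hconj, Complex.real_smul, Complex.real_smul]
  ring

theorem inverseFT_trilinear_eq (f : SchwartzMap ℝ ℂ) (ξ η σ : ℝ) :
    (2 * Real.pi : ℝ)⁻¹ • ∫ p : ℝ × ℝ, exp (-(I * ((p.1 : ℂ) * η + (p.2 : ℂ) * σ))) *
        (FT f (ξ - p.1) * FT (fun x => conj (f x)) (p.1 - ξ + p.2) * FT f (ξ - p.2))
      = ((2 * Real.pi) ^ (-(1 : ℝ)/2)) •
          ∫ y : ℝ, exp (↑(ξ * (y - η - σ)) * I) * (f (y - η) * conj (f y) * f (y - σ)) := by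
  set c : ℝ := (2 * Real.pi) ^ (-(1 : ℝ)/2)
  have hF : Integrable (𝓕 ⇑f) := by rw [← SchwartzMap.fourier_coe]; exact (𝓕 f).integrable
  have hFT : Continuous (FT f) :=
    continuous_FT (by rw [← SchwartzMap.fourier_coe]; exact (𝓕 f).continuous)
  have hFT_sub : Integrable fun a => ‖FT f (ξ - a)‖ :=
    ((integrable_comp_sub_left (FT f) ξ).2 (integrable_FT hF)).norm
  have hnorm : ∀ (t a y : ℝ), ‖exp (I * a * ↑(y - t)) * FT f (ξ - a)‖ ≤ ‖FT f (ξ - a)‖ := by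
    intro t a y
    simp [Complex.norm_exp]
  simp_rw [exp_mul_FT_conj_eq_integral]
  have hw : Integrable fun y : ℝ => exp (-(I * y * ξ)) * conj (f y) := by
    refine f.integrable.norm.mono' (by fun_prop) (ae_of_all _ fun y => ?_)
    simp [Complex.norm_exp]
  rw [integral_smul, integral_integral_mul_mul_swap (by fun_prop) (by fun_prop) (by fun_prop)
    hFT_sub hFT_sub hw (hnorm η) (hnorm σ), two_pi_inv_eq_rpow_neg_half_sq, smul_comm,
    ← integral_smul]
  congr 1
  refine integral_congr_ae (ae_of_all _ fun y => ?_)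
  have hphase : exp (I * ξ * ↑(y - η)) * exp (I * ξ * ↑(y - σ)) * exp (-(I * y * ξ))
      = exp (↑(ξ * (y - η - σ)) * I) := by
    simp only [← exp_add]
    push_cast
    ring_nf
  set A := ∫ a : ℝ, exp (I * a * ↑(y - η)) * FT f (ξ - a)
  set B := ∫ b : ℝ, exp (I * b * ↑(y - σ)) * FT f (ξ - b)
  have hA : c • A = exp (I * ξ * ↑(y - η)) * f (y - η) :=
    smul_integral_exp_mul_FT_sub f.continuous f.integrable hF ξ (y - η)
  have hB : c • B = exp (I * ξ * ↑(y - σ)) * f (y - σ) :=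
    smul_integral_exp_mul_FT_sub f.continuous f.integrable hF ξ (y - σ)
  calc c ^ 2 • (A * B * (exp (-(I * y * ξ)) * conj (f y)))
      = (c • A) * (c • B) * (exp (-(I * y * ξ)) * conj (f y)) := by
        simp only [Complex.real_smul]
        push_cast
        ring
    _ = _ := by
        rw [hA, hB]
        linear_combination (f (y - η) * conj (f y) * f (y - σ)) * hphase

/-- Trilinear kernel bound: with `G(ξ,η,σ) = 𝓕f(ξ−η)·𝓕(conj f)(η−ξ+σ)·𝓕f(ξ−σ)`,
`|𝓕⁻¹_{η,σ}[G](η,σ)| ≤ C ∫ |f(z−η)||f(z)||f(z−σ)| dz`. -/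
theorem trilinear_kernel_bound
    : ∃ C > (0:ℝ), ∀ (f : SchwartzMap ℝ ℂ) (ξ η σ : ℝ),
      ‖(2 * Real.pi : ℝ)⁻¹ •
          ∫ p : ℝ × ℝ, Complex.exp (-(Complex.I * ((p.1:ℂ) * (η:ℂ) + (p.2:ℂ) * (σ:ℂ)))) *
            (FT (⇑f) (ξ - p.1) * FT (fun x : ℝ => (starRingEnd ℂ) (f x)) (p.1 - ξ + p.2) *
              FT (⇑f) (ξ - p.2))‖
        ≤ C * ∫ z : ℝ, ‖f (z - η)‖ * ‖f z‖ * ‖f (z - σ)‖ := by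
  refine ⟨(2 * Real.pi) ^ (-(1 : ℝ)/2), by positivity, fun f ξ η σ => ?_⟩
  rw [inverseFT_trilinear_eq, norm_smul, Real.norm_of_nonneg (by positivity)]
  gcongr
  refine (norm_integral_le_integral_norm _).trans_eq ?_
  simp only [norm_mul, Complex.norm_exp_ofReal_mul_I, Complex.norm_conj, one_mul]

end
end

section
/- (Uniform decay for shifted propagators) Let T_0 ≥ 0. There is a constant C = C(T_0) such that for every f : ℝ → ℂ with ⟨x⟩f ∈ L²(ℝ) and 𝓕f ∈ L^∞(ℝ), every s ≥ 1, and every b ∈ [0, T_0], ‖ e^{i(s+b)Δ} f ‖_{L^∞} ≤ C s^{-1/2} ( ‖𝓕f‖_{L^∞} + ‖⟨x⟩f‖_{L²} ). -/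
open MeasureTheory Complex
open scoped ENNReal

noncomputable section

/-!
For `t > 0`, `e^{itΔ}` is convolution with a kernel of modulus `(4πt)^{-1/2}`, so
`‖e^{itΔ}f‖_∞ ≤ (4πt)^{-1/2} ‖f‖_{L¹}`. To justify this, damp the frequency integral by
`e^{-εξ²}`: Fubini and the Gaussian Fourier integral with `b = ε + it` produce the kernel
`(π/b)^{1/2} e^{-(x-y)²/4b}`, of modulus at most `(π/t)^{1/2}`, and dominated convergence lets
`ε → 0`. Cauchy–Schwarz against `∫ ⟨x⟩⁻² = π` gives `‖f‖_{L¹} ≤ √π ‖⟨x⟩f‖_{L²}`, and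
`s + b ≥ s` finishes the proof with `C = 1/2`.
-/

open scoped Real Topology
open Filter

lemma eLpNorm_two_inv_sqrt_one_add_sq :
    eLpNorm (fun x : ℝ => ((Real.sqrt (1 + x ^ 2) : ℂ))⁻¹) 2 volume = ENNReal.ofReal √π := by
  rw [eLpNorm_eq_lintegral_rpow_enorm_toReal (by norm_num) (by norm_num)]
  have hpt : ∀ x : ℝ, ‖((Real.sqrt (1 + x ^ 2) : ℂ))⁻¹‖ₑ ^ (2 : ℝ≥0∞).toReal
      = ENNReal.ofReal (1 + x ^ 2)⁻¹ := by
    intro x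
    rw [← ofReal_norm, norm_inv, Complex.norm_real, Real.norm_of_nonneg (Real.sqrt_nonneg _),
      ENNReal.toReal_ofNat, ENNReal.ofReal_rpow_of_nonneg (by positivity) (by norm_num),
      Real.rpow_two, inv_pow, Real.sq_sqrt (by positivity)]
  simp only [hpt]
  rw [← ofReal_integral_eq_lintegral_ofReal integrable_inv_one_add_sq
      (Eventually.of_forall fun x => by positivity), integral_univ_inv_one_add_sq,
    ENNReal.toReal_ofNat, ENNReal.ofReal_rpow_of_pos Real.pi_pos, Real.sqrt_eq_rpow]

lemma continuous_inv_sqrt_one_add_sq :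
    Continuous fun x : ℝ => ((Real.sqrt (1 + x ^ 2) : ℂ))⁻¹ :=
  Continuous.inv₀ (by fun_prop) fun x => Complex.ofReal_ne_zero.mpr (by positivity)

lemma inv_sqrt_one_add_sq_smul (f : ℝ → ℂ) :
    (fun x : ℝ => ((Real.sqrt (1 + x ^ 2) : ℂ))⁻¹) •
      (fun x : ℝ => (Real.sqrt (1 + x ^ 2) : ℂ) * f x) = f := by
  ext x
  rw [Pi.smul_apply', smul_eq_mul,
    inv_mul_cancel_left₀ (Complex.ofReal_ne_zero.mpr (by positivity))]

lemma eLpNorm_one_le_sqrt_pi_mul_of_weighted {f : ℝ → ℂ}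
    (hw : MemLp (fun x : ℝ => (Real.sqrt (1 + x ^ 2) : ℂ) * f x) 2 volume) :
    eLpNorm f 1 volume ≤
      ENNReal.ofReal √π * eLpNorm (fun x : ℝ => (Real.sqrt (1 + x ^ 2) : ℂ) * f x) 2 volume := by
  have : ENNReal.HolderTriple 2 2 1 := ⟨by rw [ENNReal.inv_two_add_inv_two, inv_one]⟩
  conv_lhs => rw [← inv_sqrt_one_add_sq_smul f]
  rw [← eLpNorm_two_inv_sqrt_one_add_sq]
  exact eLpNorm_smul_le_mul_eLpNorm hw.1 continuous_inv_sqrt_one_add_sq.aestronglyMeasurable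

lemma integrable_of_weighted {f : ℝ → ℂ}
    (hw : MemLp (fun x : ℝ => (Real.sqrt (1 + x ^ 2) : ℂ) * f x) 2 volume) :
    Integrable f := by
  refine memLp_one_iff_integrable.mp ⟨?_, ?_⟩
  · rw [← inv_sqrt_one_add_sq_smul f]
    exact continuous_inv_sqrt_one_add_sq.aestronglyMeasurable.smul hw.1
  · exact (eLpNorm_one_le_sqrt_pi_mul_of_weighted hw).trans_lt
      (ENNReal.mul_lt_top ENNReal.ofReal_lt_top hw.2)

lemma integral_norm_le_sqrt_pi_mul_of_weighted {f : ℝ → ℂ}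
    (hw : MemLp (fun x : ℝ => (Real.sqrt (1 + x ^ 2) : ℂ) * f x) 2 volume) :
    ∫ x, ‖f x‖ ≤ √π * Lnorm 2 (fun x : ℝ => (Real.sqrt (1 + x ^ 2) : ℂ) * f x) := by
  have h := ENNReal.toReal_mono (ENNReal.mul_ne_top ENNReal.ofReal_ne_top hw.2.ne)
    (eLpNorm_one_le_sqrt_pi_mul_of_weighted hw)
  rwa [ENNReal.toReal_mul, ENNReal.toReal_ofReal (Real.sqrt_nonneg _),
    eLpNorm_one_eq_lintegral_enorm,
    ← ofReal_integral_norm_eq_lintegral_enorm (integrable_of_weighted hw),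
    ENNReal.toReal_ofReal (integral_nonneg fun _ => norm_nonneg _)] at h

lemma tendsto_integral_gaussian_smul {E : Type*} [NormedAddCommGroup E] [NormedSpace ℝ E]
    {G : ℝ → E} (hG : Integrable G) :
    Tendsto (fun ε : ℝ => ∫ ξ, Real.exp (-ε * ξ ^ 2) • G ξ) (𝓝[>] 0) (𝓝 (∫ ξ, G ξ)) := by
  refine tendsto_integral_filter_of_dominated_convergence (fun ξ => ‖G ξ‖)
    (Eventually.of_forall fun ε => ((by fun_prop : Continuous fun ξ : ℝ =>
      Real.exp (-ε * ξ ^ 2)).aestronglyMeasurable.smul hG.1)) ?_ hG.norm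
    (Eventually.of_forall fun ξ => ?_)
  · filter_upwards [self_mem_nhdsWithin] with ε (hε : 0 < ε)
    refine Eventually.of_forall fun ξ => ?_
    rw [norm_smul, Real.norm_of_nonneg (Real.exp_pos _).le]
    exact mul_le_of_le_one_left (norm_nonneg _)
      (Real.exp_le_one_iff.mpr (by nlinarith [sq_nonneg ξ]))
  · have h : Continuous fun ε : ℝ => Real.exp (-ε * ξ ^ 2) • G ξ := by fun_prop
    simpa using (h.tendsto 0).mono_left nhdsWithin_le_nhds

lemma norm_gaussian_fourier_kernel_le {b : ℂ} (hb : 0 ≤ b.re) (z : ℝ) :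
    ‖(π / b) ^ (1 / 2 : ℂ) * Complex.exp (-(z : ℂ) ^ 2 / (4 * b))‖ ≤ √(π / ‖b‖) := by
  have hexp : ‖Complex.exp (-(z : ℂ) ^ 2 / (4 * b))‖ ≤ 1 := by
    rw [Complex.norm_exp, Real.exp_le_one_iff, div_eq_mul_inv, ← Complex.ofReal_pow,
      ← Complex.ofReal_neg, Complex.re_ofReal_mul, Complex.inv_re]
    refine mul_nonpos_of_nonpos_of_nonneg (by nlinarith [sq_nonneg z])
      (div_nonneg ?_ (Complex.normSq_nonneg _))
    simpa using hb
  have hcpow : ‖(π / b) ^ (1 / 2 : ℂ)‖ = √(π / ‖b‖) := by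
    rw [show (1 / 2 : ℂ) = ((1 / 2 : ℝ) : ℂ) by push_cast; rfl, Complex.norm_cpow_real,
      norm_div, Complex.norm_real, Real.norm_of_nonneg Real.pi_pos.le, Real.sqrt_eq_rpow]
  rw [norm_mul, hcpow]
  exact mul_le_of_le_one_right (Real.sqrt_nonneg _) hexp

lemma integrable_prod_gaussian_mul {f : ℝ → ℂ} (hf : Integrable f) {b : ℂ} (hb : 0 < b.re)
    (x : ℝ) :
    Integrable (fun p : ℝ × ℝ =>
      Complex.exp (Complex.I * ((p.2 : ℂ) - x) * p.1) * Complex.exp (-b * p.1 ^ 2) * f p.2)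
      (volume.prod volume) := by
  refine ((integrable_exp_neg_mul_sq hb).mul_prod hf.norm).mono' ?_
    (Eventually.of_forall fun p => ?_)
  · exact (by fun_prop : Continuous fun p : ℝ × ℝ =>
      Complex.exp (Complex.I * ((p.2 : ℂ) - x) * p.1) * Complex.exp (-b * p.1 ^ 2))
      |>.aestronglyMeasurable.mul
        (hf.1.comp_quasiMeasurePreserving Measure.quasiMeasurePreserving_snd)
  · simp [Complex.norm_exp, Complex.mul_re, ← Complex.ofReal_pow]

lemma integral_gaussian_smul_schrod_integrand {f : ℝ → ℂ} (hf : Integrable f) (t x : ℝ)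
    {ε : ℝ} (hε : 0 < ε) :
    ∫ ξ : ℝ, Real.exp (-ε * ξ ^ 2) •
        (Complex.exp (-(Complex.I * x * ξ)) * (Complex.exp (-(Complex.I * t * ξ ^ 2)) * FT f ξ))
      = (2 * π) ^ (-(1 : ℝ) / 2) • ∫ y : ℝ, (π / (ε + Complex.I * t)) ^ (1 / 2 : ℂ) *
          Complex.exp (-((y : ℂ) - x) ^ 2 / (4 * (ε + Complex.I * t))) * f y := by
  set b : ℂ := ε + Complex.I * t
  have hb : 0 < b.re := by simpa [b] using hε
  have hpt : ∀ ξ : ℝ, Real.exp (-ε * ξ ^ 2) •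
      (Complex.exp (-(Complex.I * x * ξ)) * (Complex.exp (-(Complex.I * t * ξ ^ 2)) * FT f ξ))
      = (2 * π) ^ (-(1 : ℝ) / 2) • ∫ y : ℝ,
          Complex.exp (Complex.I * ((y : ℂ) - x) * ξ) * Complex.exp (-b * ξ ^ 2) * f y := by
    intro ξ
    rw [FT, mul_smul_comm, mul_smul_comm, smul_comm]
    congr 1
    rw [Complex.real_smul, ← integral_const_mul, ← integral_const_mul, ← integral_const_mul]
    congr 1 with y
    simp only [← mul_assoc, Complex.ofReal_exp, ← Complex.exp_add, b]
    push_cast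
    ring_nf
  simp_rw [hpt, integral_smul]
  rw [integral_integral_swap (integrable_prod_gaussian_mul hf hb x)]
  simp_rw [integral_mul_const, fourierIntegral_gaussian hb]

lemma two_pi_rpow_neg_half_mul_self_mul_sqrt {t : ℝ} (ht : 0 < t) :
    (2 * π) ^ (-(1 : ℝ) / 2) * (2 * π) ^ (-(1 : ℝ) / 2) * √(π / t) = (√(4 * π * t))⁻¹ := by
  rw [← Real.rpow_add (by positivity), show -(1 : ℝ) / 2 + -(1 : ℝ) / 2 = -1 by norm_num,
    Real.rpow_neg_one, Real.sqrt_div' _ ht.le, Real.sqrt_mul' _ ht.le,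
    Real.sqrt_mul' _ Real.pi_pos.le, show (4 : ℝ) = 2 ^ 2 by norm_num, Real.sqrt_sq zero_le_two]
  have : 0 < √t := Real.sqrt_pos.mpr ht
  field_simp
  exact Real.sq_sqrt Real.pi_pos.le

lemma norm_integral_gaussian_smul_schrod_integrand_le {f : ℝ → ℂ} (hf : Integrable f)
    {t : ℝ} (ht : 0 < t) (x : ℝ) {ε : ℝ} (hε : 0 < ε) :
    ‖∫ ξ : ℝ, Real.exp (-ε * ξ ^ 2) •
        (Complex.exp (-(Complex.I * x * ξ)) * (Complex.exp (-(Complex.I * t * ξ ^ 2)) * FT f ξ))‖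
      ≤ (2 * π) ^ (-(1 : ℝ) / 2) * √(π / t) * ∫ y, ‖f y‖ := by
  have hb : t ≤ ‖(ε : ℂ) + Complex.I * t‖ := by
    have := Complex.abs_im_le_norm ((ε : ℂ) + Complex.I * t)
    simp only [Complex.add_im, Complex.ofReal_im, Complex.mul_im, Complex.I_re, Complex.I_im,
      Complex.ofReal_re, zero_mul, one_mul, zero_add] at this
    exact (le_abs_self t).trans this
  have hkernel : ∀ y : ℝ, ‖(π / (ε + Complex.I * t)) ^ (1 / 2 : ℂ) *
      Complex.exp (-((y : ℂ) - x) ^ 2 / (4 * (ε + Complex.I * t)))‖ ≤ √(π / t) := fun y => by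
    have h := norm_gaussian_fourier_kernel_le (b := ε + Complex.I * t)
      (by simpa using hε.le) (y - x)
    push_cast at h
    exact h.trans (Real.sqrt_le_sqrt (div_le_div_of_nonneg_left Real.pi_pos.le ht hb))
  rw [integral_gaussian_smul_schrod_integrand hf t x hε, norm_smul,
    Real.norm_of_nonneg (by positivity), mul_assoc, ← integral_const_mul]
  gcongr
  refine norm_integral_le_of_norm_le (hf.norm.const_mul _) (Eventually.of_forall fun y => ?_)
  rw [norm_mul]
  gcongr
  exact hkernel y

theorem norm_schrod_le {f : ℝ → ℂ} (hf : Integrable f) {t : ℝ} (ht : 0 < t) (x : ℝ) :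
    ‖schrod t f x‖ ≤ (√(4 * π * t))⁻¹ * ∫ y, ‖f y‖ := by
  set G : ℝ → ℂ := fun ξ =>
    Complex.exp (-(Complex.I * x * ξ)) * (Complex.exp (-(Complex.I * t * ξ ^ 2)) * FT f ξ)
  have hG : ‖∫ ξ, G ξ‖ ≤ (2 * π) ^ (-(1 : ℝ) / 2) * √(π / t) * ∫ y, ‖f y‖ := by
    by_cases hGi : Integrable G
    · exact le_of_tendsto (tendsto_integral_gaussian_smul hGi).norm
        (eventually_nhdsWithin_of_forall fun ε hε =>
          norm_integral_gaussian_smul_schrod_integrand_le hf ht x hε)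
    · rw [integral_undef hGi, norm_zero]
      positivity
  have hschrod : schrod t f x = (2 * π) ^ (-(1 : ℝ) / 2) • ∫ ξ, G ξ := rfl
  rw [hschrod, norm_smul, Real.norm_of_nonneg (by positivity),
    ← two_pi_rpow_neg_half_mul_self_mul_sqrt ht, mul_assoc _ _ (√(π / t)), mul_assoc, mul_assoc]
  gcongr
  rwa [← mul_assoc]

lemma Lnorm_top_le_of_forall_norm_le {g : ℝ → ℂ} {M : ℝ} (hM : 0 ≤ M) (h : ∀ x, ‖g x‖ ≤ M) :
    Lnorm ⊤ g ≤ M :=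
  ENNReal.toReal_le_of_le_ofReal hM
    (eLpNorm_exponent_top (f := g) ▸ eLpNormEssSup_le_of_ae_bound (Eventually.of_forall h))

theorem shifted_propagator_decay_general (T₀ : ℝ) :
    ∃ C > (0:ℝ), ∀ f : ℝ → ℂ,
      MemLp (fun x : ℝ => (Real.sqrt (1 + x ^ 2) : ℂ) * f x) 2 (volume : Measure ℝ) →
      MemLp (FT f) ⊤ (volume : Measure ℝ) →
      ∀ s ≥ (1:ℝ), ∀ b ∈ Set.Icc (0:ℝ) T₀,
        Lnorm ⊤ (schrod (s + b) f) ≤ C * s ^ (-(1:ℝ)/2) *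
          (Lnorm ⊤ (FT f) + Lnorm 2 (fun x : ℝ => (Real.sqrt (1 + x ^ 2) : ℂ) * f x)) := by
  refine ⟨1 / 2, one_half_pos, fun f hw _ s hs b hb => ?_⟩
  set W := Lnorm 2 (fun x : ℝ => (Real.sqrt (1 + x ^ 2) : ℂ) * f x)
  have hs : 0 < s := one_pos.trans_le hs
  have hsb : 0 < s + b := add_pos_of_pos_of_nonneg hs hb.1
  have hsqrt : (√(4 * π * (s + b)))⁻¹ * √π = (1 / 2) * (√(s + b))⁻¹ := by
    rw [mul_comm 4, Real.sqrt_mul (by positivity), Real.sqrt_mul Real.pi_pos.le,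
      show (4 : ℝ) = 2 ^ 2 by norm_num, Real.sqrt_sq zero_le_two]
    field_simp [(Real.sqrt_pos.mpr Real.pi_pos).ne']
  calc Lnorm ⊤ (schrod (s + b) f)
      ≤ (√(4 * π * (s + b)))⁻¹ * ∫ y, ‖f y‖ :=
        Lnorm_top_le_of_forall_norm_le (by positivity)
          (norm_schrod_le (integrable_of_weighted hw) hsb)
    _ ≤ (√(4 * π * (s + b)))⁻¹ * (√π * W) := by
        gcongr
        exact integral_norm_le_sqrt_pi_mul_of_weighted hw
    _ = 1 / 2 * (√(s + b))⁻¹ * W := by rw [← mul_assoc, hsqrt]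
    _ ≤ 1 / 2 * s ^ (-(1:ℝ)/2) * (Lnorm ⊤ (FT f) + W) := by
        rw [show -(1:ℝ)/2 = -(1/2) by norm_num, Real.rpow_neg hs.le, ← Real.sqrt_eq_rpow]
        have hW : 0 ≤ W := ENNReal.toReal_nonneg
        gcongr
        · linarith [hb.1]
        · exact le_add_of_nonneg_left ENNReal.toReal_nonneg

/-- Uniform decay for shifted propagators: for `b ∈ [0,T₀]` and `s ≥ 1`,
`‖e^{i(s+b)Δ}f‖_{L^∞} ≤ C s^{-1/2}(‖𝓕f‖_{L^∞} + ‖⟨x⟩f‖_{L²})`. -/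
theorem shifted_propagator_decay (T₀ : ℝ) (hT₀ : 0 ≤ T₀) :
    ∃ C > (0:ℝ), ∀ f : ℝ → ℂ,
      MemLp (fun x : ℝ => (Real.sqrt (1 + x ^ 2) : ℂ) * f x) 2 (volume : Measure ℝ) →
      MemLp (FT f) ⊤ (volume : Measure ℝ) →
      ∀ s ≥ (1:ℝ), ∀ b ∈ Set.Icc (0:ℝ) T₀,
        Lnorm ⊤ (schrod (s + b) f) ≤ C * s ^ (-(1:ℝ)/2) *
          (Lnorm ⊤ (FT f) + Lnorm 2 (fun x : ℝ => (Real.sqrt (1 + x ^ 2) : ℂ) * f x)) :=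
  shifted_propagator_decay_general T₀

end
end
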